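/- arXiv:2507.04971 — 2 statements merged into one kernel-verified Lean document; each statement's English description precedes it below -/
import Mathlib

section
/- With A, b, σ as above and β = 1-σ, the function g(μ) = ‖(A-μI)⁻¹b‖₁ - μ satisfies g(0) > 0 (assuming b ≠ 0) and g(β) < 0. -/
/-!
For `c > σ = ‖M‖₁` the matrix `c • 1 - M` is bounded below, `‖(c • 1 - M) x‖₁ ≥ (c - σ) ‖x‖₁`,
so it is invertible and `‖(c • 1 - M)⁻¹ b‖₁ ≤ ‖b‖₁ / (c - σ)`. Taking `c = 2 - σ` gives
`g(0) = ‖A⁻¹ b‖₁ > 0` for `b ≠ 0`. Since `A - β • 1 = 1 - M`, taking `c = 1` gives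
`‖(A - β • 1)⁻¹ b‖₁ ≤ ‖b‖₁ / β < β`, i.e. `g(β) < 0`.
-/

open Matrix Set

/-- ℓ¹ norm of a vector in ℝⁿ. -/
noncomputable def l1 {n : ℕ} (x : Fin n → ℝ) : ℝ := ∑ i, |x i|

/-- Induced operator 1-norm of a real matrix (maximum column sum). -/
noncomputable def op1 {n : ℕ} (A : Matrix (Fin n) (Fin n) ℝ) : ℝ := ⨆ j, ∑ i, |A i j|

section
variable {n : ℕ}

lemma l1_nonneg (x : Fin n → ℝ) : 0 ≤ l1 x :=
  Finset.sum_nonneg fun _ _ => abs_nonneg _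

@[simp] lemma l1_zero : l1 (0 : Fin n → ℝ) = 0 := by simp [l1]

lemma l1_pos {x : Fin n → ℝ} (hx : x ≠ 0) : 0 < l1 x := by
  obtain ⟨i, hi⟩ := Function.ne_iff.mp hx
  calc 0 < |x i| := abs_pos.mpr hi
    _ ≤ l1 x := Finset.single_le_sum (f := fun i => |x i|) (fun j _ => abs_nonneg _)
        (Finset.mem_univ i)

lemma l1_sub_le (x y : Fin n → ℝ) : l1 x ≤ l1 (x - y) + l1 y := by
  rw [l1, l1, l1, ← Finset.sum_add_distrib]
  exact Finset.sum_le_sum fun i _ => by simpa using abs_sub_le (x i) (y i) 0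

lemma l1_smul (c : ℝ) (x : Fin n → ℝ) : l1 (c • x) = |c| * l1 x := by
  simp only [l1, Pi.smul_apply, smul_eq_mul, abs_mul, Finset.mul_sum]

lemma sum_abs_le_op1 (M : Matrix (Fin n) (Fin n) ℝ) (j : Fin n) : ∑ i, |M i j| ≤ op1 M :=
  le_ciSup (f := fun j => ∑ i, |M i j|) (Set.finite_range _).bddAbove j

lemma l1_mulVec_le (M : Matrix (Fin n) (Fin n) ℝ) (x : Fin n → ℝ) :
    l1 (M *ᵥ x) ≤ op1 M * l1 x := by
  calc l1 (M *ᵥ x) = ∑ i, |∑ j, M i j * x j| := rfl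
    _ ≤ ∑ i, ∑ j, |M i j| * |x j| := Finset.sum_le_sum fun i _ =>
        (Finset.abs_sum_le_sum_abs _ _).trans_eq (by simp only [abs_mul])
    _ = ∑ j, (∑ i, |M i j|) * |x j| := by rw [Finset.sum_comm]; simp only [Finset.sum_mul]
    _ ≤ ∑ j, op1 M * |x j| := Finset.sum_le_sum fun j _ =>
        mul_le_mul_of_nonneg_right (sum_abs_le_op1 M j) (abs_nonneg _)
    _ = op1 M * l1 x := by rw [l1, Finset.mul_sum]

lemma l1_le_smul_one_sub_mulVec (M : Matrix (Fin n) (Fin n) ℝ) (c : ℝ) (x : Fin n → ℝ) :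
    (c - op1 M) * l1 x ≤ l1 ((c • 1 - M) *ᵥ x) := by
  have h := l1_sub_le (c • x) (M *ᵥ x)
  rw [l1_smul] at h
  rw [sub_mulVec, smul_mulVec, one_mulVec]
  nlinarith [l1_mulVec_le M x, le_abs_self c, l1_nonneg x]

lemma isUnit_det_smul_one_sub {M : Matrix (Fin n) (Fin n) ℝ} {c : ℝ} (hc : op1 M < c) :
    IsUnit (c • 1 - M).det := by
  refine isUnit_iff_ne_zero.mpr fun hdet => ?_
  obtain ⟨v, hv, hMv⟩ := exists_mulVec_eq_zero_iff.mpr hdet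
  have h := l1_le_smul_one_sub_mulVec M c v
  rw [hMv, l1_zero] at h
  nlinarith [l1_pos hv]

lemma l1_inv_smul_one_sub_mulVec_le {M : Matrix (Fin n) (Fin n) ℝ} {c : ℝ} (hc : op1 M < c)
    (b : Fin n → ℝ) : (c - op1 M) * l1 ((c • 1 - M)⁻¹ *ᵥ b) ≤ l1 b := by
  have h := l1_le_smul_one_sub_mulVec M c ((c • 1 - M)⁻¹ *ᵥ b)
  rwa [mulVec_mulVec, mul_nonsing_inv _ (isUnit_det_smul_one_sub hc), one_mulVec] at h

end

theorem stmt_6_general {n : ℕ} (M : Matrix (Fin n) (Fin n) ℝ)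
    (σ β : ℝ) (hσ : σ = op1 M) (hσ1 : σ < 1) (hβ : β = 1 - σ)
    (A : Matrix (Fin n) (Fin n) ℝ) (hA : A = (2 - σ) • (1 : Matrix (Fin n) (Fin n) ℝ) - M)
    (b : Fin n → ℝ) (hbne : b ≠ 0) (hb1 : l1 b < β ^ 2) :
    0 < l1 (A⁻¹.mulVec b) - 0 ∧ l1 ((A - β • 1)⁻¹.mulVec b) - β < 0 := by
  subst hσ hβ hA
  have hA : IsUnit ((2 - op1 M) • 1 - M).det := isUnit_det_smul_one_sub (by linarith)
  have hshift : (2 - op1 M) • 1 - M - (1 - op1 M) • 1 = (1 : ℝ) • 1 - M := by module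
  constructor
  · rw [sub_zero]
    refine l1_pos fun h0 => hbne ?_
    have h := congrArg (((2 - op1 M) • 1 - M) *ᵥ ·) h0
    rwa [mulVec_mulVec, mul_nonsing_inv _ hA, one_mulVec, mulVec_zero] at h
  · rw [hshift]
    have h := l1_inv_smul_one_sub_mulVec_le (c := 1) (by linarith) b
    nlinarith

/-- With `β = 1-σ`, the function `g(μ) = ‖(A-μI)⁻¹b‖₁ - μ` satisfies
`g(0) > 0` (since `b ≠ 0`) and `g(β) < 0`. -/
theorem stmt_6 {n : ℕ} (M : Matrix (Fin n) (Fin n) ℝ) (hM : ∀ i j, 0 ≤ M i j)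
    (σ β : ℝ) (hσ : σ = op1 M) (hσ1 : σ < 1) (hβ : β = 1 - σ)
    (A : Matrix (Fin n) (Fin n) ℝ) (hA : A = (2 - σ) • (1 : Matrix (Fin n) (Fin n) ℝ) - M)
    (b : Fin n → ℝ) (hb : ∀ i, 0 ≤ b i) (hbne : b ≠ 0) (hb1 : l1 b < β ^ 2) :
    0 < l1 (A⁻¹.mulVec b) - 0 ∧ l1 ((A - β • 1)⁻¹.mulVec b) - β < 0 :=
  stmt_6_general M σ β hσ hσ1 hβ A hA b hbne hb1
end

section
/- With A, b, σ, β as above and μ* the unique root of g(μ) = ‖(A-μI)⁻¹b‖₁ - μ in [0, β], the function g₁(μ) = (β - μ)/g(μ) is monotonically increasing on [0, μ*). -/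
/-!
For `M ≥ 0` with column sums at most `s` and `c > s`, write `R c = (c • 1 - M)⁻¹`. It maps
nonnegative vectors to nonnegative vectors: if `(c • 1 - M) x ≥ 0`, the negative part `y` of `x`
still satisfies `(c • 1 - M) y ≥ 0`, yet the coordinates of `(c • 1 - M) y` sum to at most
`(c - s) ∑ y ≤ 0`, forcing `y = 0`. Applying the resolvent identity twice gives, for
`c₂ = t c₁ + (1 - t) c₃`, `t R c₁ + (1 - t) R c₃ - R c₂ = t (1 - t) (c₃ - c₁)² R c₁ R c₃ R c₂`,
so `c ↦ ‖R c b‖₁` is convex, and hence so is `g μ = ‖R (2 - σ - μ) b‖₁ - μ`. Since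
`β ‖R 1 b‖₁ ≤ ‖b‖₁ < β²`, `g β < 0`. For `μ₁ < μ₂ < β` write `μ₂ = t μ₁ + (1 - t) β`; then
`g μ₂ ≤ t g μ₁ + (1 - t) g β < t g μ₁`, i.e. `g μ₂ / (β - μ₂) < g μ₁ / (β - μ₁)`.
-/

open Matrix Set

namespace Matrix

variable {ι : Type*} [Fintype ι] [DecidableEq ι]

section CommRing

variable {R : Type*} [CommRing R] {M : Matrix ι ι R}

theorem inv_smul_one_sub_sub_inv {a c : R} (ha : IsUnit (a • 1 - M).det)
    (hc : IsUnit (c • 1 - M).det) :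
    (a • 1 - M)⁻¹ - (c • 1 - M)⁻¹ = (c - a) • ((a • 1 - M)⁻¹ * (c • 1 - M)⁻¹) := by
  calc (a • 1 - M)⁻¹ - (c • 1 - M)⁻¹
        = (a • 1 - M)⁻¹ * ((c • 1 - M) - (a • 1 - M)) * (c • 1 - M)⁻¹ := by
          rw [mul_sub, sub_mul, nonsing_inv_mul _ ha, mul_assoc, mul_nonsing_inv _ hc, mul_one,
            one_mul]
    _ = _ := by
          rw [show (c • 1 - M) - (a • 1 - M) = (c - a) • (1 : Matrix ι ι R) by module,
            mul_smul_comm, mul_one, smul_mul_assoc]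

theorem smul_inv_add_smul_inv_sub_inv {c₁ c₃ t : R} (h₁ : IsUnit (c₁ • 1 - M).det)
    (h₂ : IsUnit ((t * c₁ + (1 - t) * c₃) • 1 - M).det) (h₃ : IsUnit (c₃ • 1 - M).det) :
    t • (c₁ • 1 - M)⁻¹ + (1 - t) • (c₃ • 1 - M)⁻¹ - ((t * c₁ + (1 - t) * c₃) • 1 - M)⁻¹
      = (t * (1 - t) * (c₃ - c₁) ^ 2) •
          ((c₁ • 1 - M)⁻¹ * (c₃ • 1 - M)⁻¹ * ((t * c₁ + (1 - t) * c₃) • 1 - M)⁻¹) := by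
  set c₂ := t * c₁ + (1 - t) * c₃
  have h12 := inv_smul_one_sub_sub_inv h₁ h₂
  have h32 := inv_smul_one_sub_sub_inv h₃ h₂
  have h13 : (c₁ • 1 - M)⁻¹ * (c₂ • 1 - M)⁻¹ - (c₃ • 1 - M)⁻¹ * (c₂ • 1 - M)⁻¹
      = (c₃ - c₁) • ((c₁ • 1 - M)⁻¹ * (c₃ • 1 - M)⁻¹ * (c₂ • 1 - M)⁻¹) := by
    rw [← sub_mul, inv_smul_one_sub_sub_inv h₁ h₃, smul_mul_assoc]
  rw [show c₂ - c₁ = (1 - t) * (c₃ - c₁) by ring] at h12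
  rw [show c₂ - c₃ = -t * (c₃ - c₁) by ring] at h32
  linear_combination (norm := module) t • h12 + (1 - t) • h32 + (t * (1 - t) * (c₃ - c₁)) • h13

end CommRing

theorem smul_one_sub_mulVec_apply (M : Matrix ι ι ℝ) (c : ℝ) (x : ι → ℝ) (i : ι) :
    ((c • 1 - M) *ᵥ x) i = c * x i - ∑ j, M i j * x j := by
  simp only [sub_mulVec, smul_mulVec, one_mulVec, Pi.sub_apply, Pi.smul_apply, smul_eq_mul]
  rfl

theorem sum_smul_one_sub_mulVec (M : Matrix ι ι ℝ) (c : ℝ) (x : ι → ℝ) :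
    ∑ i, ((c • 1 - M) *ᵥ x) i = ∑ j, (c - ∑ i, M i j) * x j := by
  simp only [smul_one_sub_mulVec_apply, Finset.sum_sub_distrib, sub_mul, Finset.sum_mul]
  rw [Finset.sum_comm]

variable {M : Matrix ι ι ℝ} {s c : ℝ} {x : ι → ℝ}

theorem sub_mul_sum_le_sum_smul_one_sub_mulVec (hcol : ∀ j, ∑ i, M i j ≤ s) (hx : 0 ≤ x) :
    (c - s) * ∑ i, x i ≤ ∑ i, ((c • 1 - M) *ᵥ x) i := by
  rw [sum_smul_one_sub_mulVec, Finset.mul_sum]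
  exact Finset.sum_le_sum fun j _ => mul_le_mul_of_nonneg_right (by linarith [hcol j]) (hx j)

theorem sum_smul_one_sub_mulVec_le_sub_mul_sum (hcol : ∀ j, ∑ i, M i j ≤ s) (hx : x ≤ 0) :
    ∑ i, ((c • 1 - M) *ᵥ x) i ≤ (c - s) * ∑ i, x i := by
  rw [sum_smul_one_sub_mulVec, Finset.mul_sum]
  exact Finset.sum_le_sum fun j _ => mul_le_mul_of_nonpos_right (by linarith [hcol j]) (hx j)

theorem nonneg_of_smul_one_sub_mulVec_nonneg (hM : ∀ i j, 0 ≤ M i j)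
    (hcol : ∀ j, ∑ i, M i j ≤ s) (hsc : s < c) (hx : 0 ≤ (c • 1 - M) *ᵥ x) :
    0 ≤ x := by
  set y : ι → ℝ := fun i => min (x i) 0
  have hy : y ≤ 0 := fun i => min_le_right _ _
  have hMy : ∀ i, ∑ j, M i j * y j ≤ 0 := fun i =>
    Finset.sum_nonpos fun j _ => mul_nonpos_of_nonneg_of_nonpos (hM i j) (hy j)
  have hDy : 0 ≤ (c • 1 - M) *ᵥ y := by
    intro i
    have hxi := hx i
    rw [Pi.zero_apply, smul_one_sub_mulVec_apply] at hxi ⊢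
    rcases le_or_gt 0 (x i) with hxi0 | hxi0
    · simp only [y, min_eq_right hxi0]
      linarith [hMy i]
    · have : ∑ j, M i j * y j ≤ ∑ j, M i j * x j :=
        Finset.sum_le_sum fun j _ => mul_le_mul_of_nonneg_left (min_le_left _ _) (hM i j)
      simp only [y, min_eq_left hxi0.le]
      linarith
  have hsum : ∑ i, y i = 0 := by
    have h1 := Finset.sum_nonneg fun i (_ : i ∈ Finset.univ) => hDy i
    have h2 := sum_smul_one_sub_mulVec_le_sub_mul_sum hcol hy (c := c)
    have h3 := Finset.sum_nonpos fun i (_ : i ∈ Finset.univ) => hy i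
    nlinarith
  intro i
  have := (Finset.sum_eq_zero_iff_of_nonpos fun i _ => hy i).mp hsum i (Finset.mem_univ i)
  exact min_eq_right_iff.mp this

theorem det_smul_one_sub_ne_zero (hM : ∀ i j, 0 ≤ M i j) (hcol : ∀ j, ∑ i, M i j ≤ s)
    (hsc : s < c) : (c • 1 - M).det ≠ 0 := by
  intro hdet
  obtain ⟨v, hv, hDv⟩ := exists_mulVec_eq_zero_iff.mpr hdet
  have hpos := nonneg_of_smul_one_sub_mulVec_nonneg hM hcol hsc hDv.ge
  have hneg := nonneg_of_smul_one_sub_mulVec_nonneg hM hcol hsc (x := -v)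
    (by rw [mulVec_neg, hDv, neg_zero])
  exact hv (le_antisymm (neg_nonneg.mp hneg) hpos)

theorem smul_one_sub_mulVec_inv_mulVec (hM : ∀ i j, 0 ≤ M i j) (hcol : ∀ j, ∑ i, M i j ≤ s)
    (hsc : s < c) (b : ι → ℝ) :
    (c • 1 - M) *ᵥ ((c • 1 - M)⁻¹ *ᵥ b) = b := by
  rw [mulVec_mulVec, mul_nonsing_inv _ (det_smul_one_sub_ne_zero hM hcol hsc).isUnit,
    one_mulVec]

theorem inv_smul_one_sub_mulVec_nonneg (hM : ∀ i j, 0 ≤ M i j) (hcol : ∀ j, ∑ i, M i j ≤ s)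
    (hsc : s < c) {b : ι → ℝ} (hb : 0 ≤ b) : 0 ≤ (c • 1 - M)⁻¹ *ᵥ b :=
  nonneg_of_smul_one_sub_mulVec_nonneg hM hcol hsc
    (by rwa [smul_one_sub_mulVec_inv_mulVec hM hcol hsc])

theorem sub_mul_sum_inv_smul_one_sub_mulVec_le (hM : ∀ i j, 0 ≤ M i j)
    (hcol : ∀ j, ∑ i, M i j ≤ s) (hsc : s < c) {b : ι → ℝ} (hb : 0 ≤ b) :
    (c - s) * ∑ i, ((c • 1 - M)⁻¹ *ᵥ b) i ≤ ∑ i, b i := by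
  simpa only [smul_one_sub_mulVec_inv_mulVec hM hcol hsc] using
    sub_mul_sum_le_sum_smul_one_sub_mulVec (c := c) hcol
      (inv_smul_one_sub_mulVec_nonneg hM hcol hsc hb)

end Matrix

theorem l1_eq_sum_of_nonneg {n : ℕ} {x : Fin n → ℝ} (hx : 0 ≤ x) : l1 x = ∑ i, x i :=
  Finset.sum_congr rfl fun i _ => abs_of_nonneg (hx i)

theorem convexOn_l1_inv_smul_one_sub_mulVec {n : ℕ} {M : Matrix (Fin n) (Fin n) ℝ} {s : ℝ}
    (hM : ∀ i j, 0 ≤ M i j) (hcol : ∀ j, ∑ i, M i j ≤ s) {b : Fin n → ℝ} (hb : 0 ≤ b) :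
    ConvexOn ℝ (Ioi s) (fun c => l1 ((c • 1 - M)⁻¹ *ᵥ b)) := by
  refine ⟨convex_Ioi s, fun c₁ h₁ c₃ h₃ t t' ht ht' htt => ?_⟩
  obtain rfl : t' = 1 - t := by linarith
  have h₂ := convex_Ioi s h₁ h₃ ht ht' htt
  simp only [smul_eq_mul] at h₂ ⊢
  set c₂ := t * c₁ + (1 - t) * c₃
  set R : ℝ → Matrix (Fin n) (Fin n) ℝ := fun c => (c • 1 - M)⁻¹
  have hR : ∀ c ∈ Ioi s, ∀ {v : Fin n → ℝ}, 0 ≤ v → 0 ≤ R c *ᵥ v :=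
    fun c hc _ hv => inv_smul_one_sub_mulVec_nonneg hM hcol hc hv
  have hu : ∀ c ∈ Ioi s, IsUnit (c • 1 - M).det :=
    fun c hc => (det_smul_one_sub_ne_zero hM hcol hc).isUnit
  have hle : R c₂ *ᵥ b ≤ t • (R c₁ *ᵥ b) + (1 - t) • (R c₃ *ᵥ b) := by
    have : 0 ≤ (t • R c₁ + (1 - t) • R c₃ - R c₂) *ᵥ b := by
      rw [smul_inv_add_smul_inv_sub_inv (hu _ h₁) (hu _ h₂) (hu _ h₃), smul_mulVec,
        ← mulVec_mulVec, ← mulVec_mulVec]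
      exact smul_nonneg (by positivity) (hR _ h₁ (hR _ h₃ (hR _ h₂ hb)))
    rwa [sub_mulVec, add_mulVec, smul_mulVec, smul_mulVec, sub_nonneg] at this
  have hl1 : ∀ c ∈ Ioi s, l1 ((c • 1 - M)⁻¹ *ᵥ b) = ∑ i, (R c *ᵥ b) i :=
    fun c hc => l1_eq_sum_of_nonneg (hR c hc hb)
  rw [hl1 _ h₁, hl1 _ h₂, hl1 _ h₃, Finset.mul_sum, Finset.mul_sum,
    ← Finset.sum_add_distrib]
  exact Finset.sum_le_sum fun i _ => hle i

theorem strictMonoOn_sub_div_of_convexOn {g : ℝ → ℝ} {S I : Set ℝ} {β : ℝ}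
    (hg : ConvexOn ℝ S g) (hβ : β ∈ S) (hgβ : g β < 0) (hIS : I ⊆ S) (hIβ : ∀ μ ∈ I, μ < β)
    (hpos : ∀ μ ∈ I, 0 < g μ) : StrictMonoOn (fun μ => (β - μ) / g μ) I := by
  intro μ₁ h₁ μ₂ h₂ h12
  have hβ₁ : 0 < β - μ₁ := sub_pos.2 (hIβ μ₁ h₁)
  have hβ₂ : 0 < β - μ₂ := sub_pos.2 (hIβ μ₂ h₂)
  obtain ⟨t, ht⟩ : ∃ t, t * (β - μ₁) = β - μ₂ := ⟨_, div_mul_cancel₀ _ hβ₁.ne'⟩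
  have ht0 : 0 ≤ t := by nlinarith
  have ht1 : t < 1 := by nlinarith
  have hμ₂ : t * μ₁ + (1 - t) * β = μ₂ := by linarith
  have hconv : g μ₂ ≤ t * g μ₁ + (1 - t) * g β := by
    simpa only [smul_eq_mul, hμ₂] using
      hg.2 (hIS h₁) hβ ht0 (sub_nonneg.2 ht1.le) (add_sub_cancel t 1)
  have hlt : g μ₂ < t * g μ₁ := by nlinarith [mul_neg_of_pos_of_neg (sub_pos.2 ht1) hgβ]
  rw [div_lt_div_iff₀ (hpos μ₁ h₁) (hpos μ₂ h₂)]
  calc (β - μ₁) * g μ₂ < (β - μ₁) * (t * g μ₁) := mul_lt_mul_of_pos_left hlt hβ₁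
    _ = (β - μ₂) * g μ₁ := by rw [← ht]; ring

theorem stmt_7_general {n : ℕ} (M : Matrix (Fin n) (Fin n) ℝ) (hM : ∀ i j, 0 ≤ M i j)
    (σ β : ℝ) (hσ : σ = op1 M) (hσ1 : σ < 1) (hβ : β = 1 - σ)
    (A : Matrix (Fin n) (Fin n) ℝ) (hA : A = (2 - σ) • (1 : Matrix (Fin n) (Fin n) ℝ) - M)
    (b : Fin n → ℝ) (hb : ∀ i, 0 ≤ b i) (hb1 : l1 b < β ^ 2)
    (μs : ℝ) (hμs : μs ∈ Icc (0 : ℝ) β)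
    (hgpos : ∀ μ ∈ Ico (0 : ℝ) μs, 0 < l1 ((A - μ • 1)⁻¹.mulVec b) - μ) :
    StrictMonoOn (fun μ => (β - μ) / (l1 ((A - μ • 1)⁻¹.mulVec b) - μ))
      (Ico (0 : ℝ) μs) := by
  have hcol : ∀ j, ∑ i, M i j ≤ σ := fun j => by
    rw [hσ, ← Finset.sum_congr rfl fun i _ => abs_of_nonneg (hM i j)]
    exact le_ciSup (f := fun j => ∑ i, |M i j|) (Set.finite_range _).bddAbove j
  have hres : ∀ μ : ℝ, A - μ • 1 = (2 - σ - μ) • 1 - M :=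
    fun μ => by rw [hA]; module
  simp only [hres] at hgpos ⊢
  have hconv : ConvexOn ℝ (Iio (2 - 2 * σ))
      (fun μ => l1 (((2 - σ - μ) • 1 - M)⁻¹ *ᵥ b) - μ) :=
    (((convexOn_l1_inv_smul_one_sub_mulVec hM hcol hb).comp_affineMap
      (AffineMap.const ℝ ℝ (2 - σ) - AffineMap.id ℝ ℝ)).subset
      (fun μ (hμ : μ < 2 - 2 * σ) => show σ < 2 - σ - μ by linarith) (convex_Iio _)).sub
      (concaveOn_id (convex_Iio _))
  have hgβ : l1 (((2 - σ - β) • 1 - M)⁻¹ *ᵥ b) - β < 0 := by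
    have hσc : σ < 2 - σ - β := by linarith
    have hbound := sub_mul_sum_inv_smul_one_sub_mulVec_le hM hcol hσc hb
    rw [← l1_eq_sum_of_nonneg (inv_smul_one_sub_mulVec_nonneg hM hcol hσc hb),
      ← l1_eq_sum_of_nonneg hb] at hbound
    nlinarith
  have hIβ : ∀ μ ∈ Ico 0 μs, μ < β := fun μ hμ => hμ.2.trans_le hμs.2
  exact strictMonoOn_sub_div_of_convexOn hconv (show β < 2 - 2 * σ by linarith) hgβ
    (fun μ hμ => show μ < 2 - 2 * σ by linarith [hIβ μ hμ]) hIβ hgpos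

/-- Lemma 9: the function `g₁(μ) = (β - μ)/g(μ)`, with
`g(μ) = ‖(A-μI)⁻¹b‖₁ - μ`, is monotonically increasing on `[0, μ*)`. -/
theorem stmt_7 {n : ℕ} (M : Matrix (Fin n) (Fin n) ℝ) (hM : ∀ i j, 0 ≤ M i j)
    (σ β : ℝ) (hσ : σ = op1 M) (hσ1 : σ < 1) (hβ : β = 1 - σ)
    (A : Matrix (Fin n) (Fin n) ℝ) (hA : A = (2 - σ) • (1 : Matrix (Fin n) (Fin n) ℝ) - M)
    (b : Fin n → ℝ) (hb : ∀ i, 0 ≤ b i) (hbne : b ≠ 0) (hb1 : l1 b < β ^ 2)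
    (μs : ℝ) (hμs : μs ∈ Icc (0 : ℝ) β) (hfix : l1 ((A - μs • 1)⁻¹.mulVec b) = μs)
    (hgpos : ∀ μ ∈ Ico (0 : ℝ) μs, 0 < l1 ((A - μ • 1)⁻¹.mulVec b) - μ) :
    StrictMonoOn (fun μ => (β - μ) / (l1 ((A - μ • 1)⁻¹.mulVec b) - μ))
      (Ico (0 : ℝ) μs) :=
  stmt_7_general M hM σ β hσ hσ1 hβ A hA b hb hb1 μs hμs hgpos
end
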